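/- Let μ ∈ ℂ with Re μ > 0, |λ| < 1, and z₀ ∈ D. Let γ : z(t), 0 ≤ t ≤ 1, be a C¹-curve in D with z(0) = 0 and z(1) = z₀. Then V(z₀, λ) is contained in the closed disk {w ∈ ℂ : |w − (μ/π)·C(λ,γ)| ≤ (|μ|/π)·R(λ,γ)}, where C(λ,γ) = ∫₀¹ c(z(t),λ)·z'(t) dt and R(λ,γ) = ∫₀¹ r(z(t),λ)·|z'(t)| dt, with c(z,λ) = (|z|²(conj(z) − λ)(1 − conj(λ)) − (1 − λ)(1 − conj(λ)·conj(z))) / ((1 − z)(1 − |z|²)(1 + |z|² − 2·Re(λz))) and r(z,λ) = (1 − |λ|²)|z| / ((1 − |z|²)(1 + |z|² − 2·Re(λz))). -/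

import Mathlib

open Complex Set Metric

noncomputable section

/-- The open unit disk in `ℂ`. -/
def unitDisk : Set ℂ := Metric.ball (0 : ℂ) 1

/-- `P_f(z) = (2π/μ)·(z f'(z)/f(z)) + (1+z)/(1−z)`. -/
def Pfun (μ : ℂ) (f : ℂ → ℂ) (z : ℂ) : ℂ :=
  2 * (Real.pi : ℂ) / μ * (z * deriv f z / f z) + (1 + z) / (1 - z)

/-- Membership in the class `F_μ`: analytic, non-vanishing on the disk, `f(0) = 1`,
and `Re P_f > 0` on the disk. -/
def memF (μ : ℂ) (f : ℂ → ℂ) : Prop :=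
  AnalyticOnNhd ℂ f unitDisk ∧ (∀ z ∈ unitDisk, f z ≠ 0) ∧ f 0 = 1 ∧
    ∀ z ∈ unitDisk, 0 < (Pfun μ f z).re

/-- Membership in the class `F_μ(λ)`: `f ∈ F_μ` with `f'(0) = (μ/π)(λ − 1)`. -/
def memFlam (μ lam : ℂ) (f : ℂ → ℂ) : Prop :=
  memF μ f ∧ deriv f 0 = μ / (Real.pi : ℂ) * (lam - 1)

/-- The branch of `log f` vanishing at `0`: `log f(z) = ∫₀^z f'(ζ)/f(ζ) dζ`
(integral over the segment from `0` to `z`). -/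
def logf (f : ℂ → ℂ) (z : ℂ) : ℂ :=
  ∫ t in (0:ℝ)..1, deriv f (t * z) / f (t * z) * z

/-- The region of variability `V(z₀, λ) = {log f(z₀) : f ∈ F_μ(λ)}`. -/
def Vset (μ lam z₀ : ℂ) : Set ℂ := {w | ∃ f, memFlam μ lam f ∧ w = logf f z₀}

/-- `δ(w, λ) = (w + λ)/(1 + conj(λ) w)`. -/
def dl (lam w : ℂ) : ℂ := (w + lam) / (1 + (starRingEnd ℂ) lam * w)

/-- `log H_{a,λ}(z) = (μ/π)·∫₀^z (δ(aζ,λ) − 1)/((1 − δ(aζ,λ)ζ)(1 − ζ)) dζ`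
(integral over the segment from `0` to `z`). -/
def Hlog (μ lam a z : ℂ) : ℂ :=
  μ / (Real.pi : ℂ) *
    ∫ t in (0:ℝ)..1,
      (dl lam (a * (t * z)) - 1) /
        ((1 - dl lam (a * (t * z)) * (t * z)) * (1 - t * z)) * z

/-- The function `H_{a,λ}(z) = exp(log H_{a,λ}(z))`. -/
def Hfun (μ lam a z : ℂ) : ℂ := Complex.exp (Hlog μ lam a z)

/-- `c(z, λ)`. -/
def cfun (z lam : ℂ) : ℂ :=
  ((‖z‖ : ℂ) ^ 2 * ((starRingEnd ℂ) z - lam) * (1 - (starRingEnd ℂ) lam)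
      - (1 - lam) * (1 - (starRingEnd ℂ) lam * (starRingEnd ℂ) z)) /
    ((1 - z) * (1 - (‖z‖ : ℂ) ^ 2)
      * (1 + (‖z‖ : ℂ) ^ 2 - 2 * ((lam * z).re : ℂ)))

/-- `r(z, λ)`. -/
def rfun (z lam : ℂ) : ℝ :=
  (1 - ‖lam‖ ^ 2) * ‖z‖ /
    ((1 - ‖z‖ ^ 2) * (1 + ‖z‖ ^ 2 - 2 * (lam * z).re))

/-- A starlike univalent function on the unit disk: analytic, `φ(0) = 0`, `φ'(0) = 1`,
univalent, and `Re(z φ'(z)/φ(z)) > 0` on the disk. -/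
def IsStarlike (φ : ℂ → ℂ) : Prop :=
  AnalyticOnNhd ℂ φ unitDisk ∧ φ 0 = 0 ∧ deriv φ 0 = 1 ∧
    Set.InjOn φ unitDisk ∧
    ∀ z ∈ unitDisk, z ≠ 0 → 0 < (z * deriv φ z / φ z).re

/-- `G(z) = (μ/π)·∫₀^z e^{iθ}ζ/(1 + (conj(λ)e^{iθ} − λ)ζ − e^{iθ}ζ²)² dζ`
(integral over the segment from `0` to `z`). -/
def Gfun (μ lam : ℂ) (θ : ℝ) (z : ℂ) : ℂ :=
  μ / (Real.pi : ℂ) *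
    ∫ t in (0:ℝ)..1,
      Complex.exp (θ * Complex.I) * (t * z) /
        (1 + ((starRingEnd ℂ) lam * Complex.exp (θ * Complex.I) - lam) * (t * z)
          - Complex.exp (θ * Complex.I) * (t * z) ^ 2) ^ 2 * z

end

/-!
For `f ∈ F_μ(λ)` the function `ω = (P_f - 1)/(P_f + 1)` maps the disk into itself with
`ω(0) = 0` and `ω'(0) = λ`. By the Schwarz lemma `ω(z)/z` takes values in the closed disk, and
applying the Schwarz lemma again after the disk automorphism sending `λ` to `0` gives
`ω(z) = z δ(w, λ)` with `|w| ≤ |z|`. Solving `P_f = (1 + ω)/(1 - ω)` for `f'/f` shows that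
`(π/μ) f'(z)/f(z)` is a Möbius function of `w`, which maps the disk `|w| ≤ |z|` into the disk
of centre `c(z, λ)` and radius `r(z, λ)`. Finally `f'/f` has a primitive on the unit disk, so
`log f(z₀)` is the integral of `f'/f` along `γ`, and the pointwise bound integrates to the claim.
-/

open ComplexConjugate

lemma add_ne_zero_of_norm_lt {E : Type*} [SeminormedAddGroup E] {x y : E} (h : ‖x‖ < ‖y‖) :
    x + y ≠ 0 := by
  intro hxy
  rw [eq_neg_of_add_eq_zero_right hxy, norm_neg] at h
  exact lt_irrefl _ h

lemma norm_conj_mul_add_le_mul_norm {a b w : ℂ} {s : ℝ} (hw : ‖w‖ ≤ s) (hab : ‖b‖ * s ≤ ‖a‖) :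
    ‖conj a * w + conj b * (s : ℂ) ^ 2‖ ≤ s * ‖b * w + a‖ := by
  have hs : 0 ≤ s := (norm_nonneg w).trans hw
  have key : ((s * ‖b * w + a‖) ^ 2 - ‖conj a * w + conj b * (s : ℂ) ^ 2‖ ^ 2 : ℝ)
      = (s ^ 2 - ‖w‖ ^ 2) * (‖a‖ ^ 2 - (‖b‖ * s) ^ 2) := by
    apply Complex.ofReal_injective
    push_cast
    simp only [mul_pow, ← Complex.mul_conj']
    simp only [map_add, map_mul, map_pow, Complex.conj_conj, Complex.conj_ofReal]
    ring
  have hprod : 0 ≤ (s ^ 2 - ‖w‖ ^ 2) * (‖a‖ ^ 2 - (‖b‖ * s) ^ 2) := by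
    apply mul_nonneg <;> rw [sub_nonneg] <;> gcongr
  exact le_of_sq_le_sq (by nlinarith) (by positivity)

lemma norm_conj_mul_add_div_le {a b w : ℂ} {s : ℝ} (hw : ‖w‖ ≤ s) (hab : ‖b‖ * s ≤ ‖a‖) :
    ‖(conj a * w + conj b * (s : ℂ) ^ 2) / (b * w + a)‖ ≤ s := by
  rw [norm_div]
  exact div_le_of_le_mul₀ (norm_nonneg _) ((norm_nonneg w).trans hw)
    (norm_conj_mul_add_le_mul_norm hw hab)

lemma norm_sub_one_div_add_one_lt_one {p : ℂ} (hp : 0 < p.re) : ‖(p - 1) / (p + 1)‖ < 1 := by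
  have hp1 : p + 1 ≠ 0 := fun h => by
    have := congrArg Complex.re h
    simp only [Complex.add_re, Complex.one_re, Complex.zero_re] at this
    linarith
  rw [norm_div, div_lt_one (norm_pos_iff.2 hp1)]
  refine lt_of_pow_lt_pow_left₀ 2 (norm_nonneg _) ?_
  simp only [Complex.sq_norm, Complex.normSq_apply, Complex.add_re, Complex.sub_re,
    Complex.add_im, Complex.sub_im, Complex.one_re, Complex.one_im]
  nlinarith

lemma one_sub_conj_mul_ne_zero {lam u : ℂ} (hlam : ‖lam‖ < 1) (hu : ‖u‖ ≤ 1) :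
    1 - conj lam * u ≠ 0 := by
  rw [sub_eq_add_neg, add_comm]
  refine add_ne_zero_of_norm_lt ?_
  rw [norm_neg, norm_mul, Complex.norm_conj, norm_one]
  nlinarith [norm_nonneg lam, norm_nonneg u]

lemma norm_sub_div_one_sub_conj_mul_le_one {lam u : ℂ} (hlam : ‖lam‖ < 1) (hu : ‖u‖ ≤ 1) :
    ‖(u - lam) / (1 - conj lam * u)‖ ≤ 1 := by
  have h := norm_conj_mul_add_le_mul_norm (a := 1) (b := -conj lam) (s := 1) hu
    (by simpa using hlam.le)
  simp only [map_one, one_mul, map_neg, Complex.conj_conj, Complex.ofReal_one, one_pow, mul_one,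
    neg_mul, ← sub_eq_add_neg, neg_add_eq_sub] at h
  rw [norm_div]
  exact div_le_one_of_le₀ h (norm_nonneg _)

lemma dl_sub_div_one_sub_conj_mul {lam u : ℂ} (hlam : ‖lam‖ < 1) (hu : 1 - conj lam * u ≠ 0) :
    dl lam ((u - lam) / (1 - conj lam * u)) = u := by
  have hl : 1 - conj lam * lam ≠ 0 := by
    rw [Complex.conj_mul', sub_ne_zero]
    intro h
    have : ‖lam‖ ^ 2 = 1 := by exact_mod_cast h.symm
    nlinarith [norm_nonneg lam]
  have hnum : (u - lam) / (1 - conj lam * u) + lam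
      = u * (1 - conj lam * lam) / (1 - conj lam * u) := by
    rw [eq_div_iff hu, add_mul, div_mul_cancel₀ _ hu]; ring
  have hden : 1 + conj lam * ((u - lam) / (1 - conj lam * u))
      = (1 - conj lam * lam) / (1 - conj lam * u) := by
    rw [eq_div_iff hu, add_mul, mul_assoc, div_mul_cancel₀ _ hu]; ring
  rw [dl, hnum, hden, mul_div_assoc, mul_div_cancel_right₀ _ (div_ne_zero hl hu)]

lemma exists_norm_le_eq_mul_dl {ω : ℂ → ℂ} {lam z : ℂ} (hω : DifferentiableOn ℂ ω (ball 0 1))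
    (hmaps : MapsTo ω (ball 0 1) (closedBall 0 1)) (h0 : ω 0 = 0) (hderiv : deriv ω 0 = lam)
    (hlam : ‖lam‖ < 1) (hz : z ∈ ball (0 : ℂ) 1) :
    ∃ w, ‖w‖ ≤ ‖z‖ ∧ ω z = z * dl lam w := by
  set δ := dslope ω 0
  have hδ : DifferentiableOn ℂ δ (ball 0 1) :=
    (differentiableOn_dslope (ball_mem_nhds 0 one_pos)).2 hω
  have hδle : ∀ y ∈ ball (0 : ℂ) 1, ‖δ y‖ ≤ 1 := fun y hy => by
    simpa using Complex.norm_dslope_le_div_of_mapsTo_ball hω (by rwa [h0]) hy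
  have hδ0 : δ 0 = lam := by rw [← hderiv]; exact dslope_same ω 0
  have hne : ∀ y ∈ ball (0 : ℂ) 1, 1 - conj lam * δ y ≠ 0 := fun y hy =>
    one_sub_conj_mul_ne_zero hlam (hδle y hy)
  set v := fun y => (δ y - lam) / (1 - conj lam * δ y)
  have hv : DifferentiableOn ℂ v (ball 0 1) :=
    (hδ.sub_const lam).div ((hδ.const_mul _).const_sub 1) hne
  have hvz : ‖v z‖ ≤ ‖z‖ :=
    Complex.norm_le_norm_of_mapsTo_ball hv
      (fun y hy => mem_closedBall_zero_iff.2
        (norm_sub_div_one_sub_conj_mul_le_one hlam (hδle y hy)))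
      (by simp [v, hδ0]) (mem_ball_zero_iff.1 hz)
  refine ⟨v z, hvz, ?_⟩
  rw [dl_sub_div_one_sub_conj_mul hlam (hne z hz)]
  simpa [h0] using (sub_smul_dslope ω 0 z).symm

lemma one_add_sq_sub_two_re_pos {lam : ℂ} (hlam : ‖lam‖ < 1) (z : ℂ) :
    0 < 1 + ‖z‖ ^ 2 - 2 * (lam * z).re := by
  have h : (lam * z).re ≤ ‖lam‖ * ‖z‖ := by simpa using Complex.re_le_norm (lam * z)
  nlinarith [norm_nonneg z, norm_nonneg lam, sq_nonneg (1 - ‖z‖)]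

lemma sq_norm_one_sub_mul_sub (lam z : ℂ) :
    ‖1 - lam * z‖ ^ 2 - ‖conj lam - z‖ ^ 2 * ‖z‖ ^ 2
      = (1 - ‖z‖ ^ 2) * (1 + ‖z‖ ^ 2 - 2 * (lam * z).re) := by
  apply Complex.ofReal_injective
  push_cast
  simp only [← Complex.mul_conj', Complex.re_eq_add_conj]
  simp only [map_sub, map_mul, map_one, Complex.conj_conj]
  ring

lemma norm_conj_sub_mul_lt {lam z : ℂ} (hlam : ‖lam‖ < 1) (hz : ‖z‖ < 1) :
    ‖conj lam - z‖ * ‖z‖ < ‖1 - lam * z‖ := by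
  have h := sq_norm_one_sub_mul_sub lam z
  have hz2 : ‖z‖ ^ 2 < 1 := by nlinarith [norm_nonneg z]
  have := mul_pos (sub_pos.2 hz2) (one_add_sq_sub_two_re_pos hlam z)
  exact lt_of_pow_lt_pow_left₀ 2 (norm_nonneg _) (by nlinarith)

lemma rfun_denom_pos {lam z : ℂ} (hlam : ‖lam‖ < 1) (hz : ‖z‖ < 1) :
    0 < (1 - ‖z‖ ^ 2) * (1 + ‖z‖ ^ 2 - 2 * (lam * z).re) :=
  mul_pos (by nlinarith [norm_nonneg z]) (one_add_sq_sub_two_re_pos hlam z)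

lemma cfun_denom_ne_zero {lam z : ℂ} (hlam : ‖lam‖ < 1) (hz : ‖z‖ < 1) :
    (1 - z) * (1 - (‖z‖ : ℂ) ^ 2) * (1 + (‖z‖ : ℂ) ^ 2 - 2 * ((lam * z).re : ℂ)) ≠ 0 := by
  rw [mul_assoc]
  refine mul_ne_zero (sub_ne_zero.2 fun h => by simp [← h] at hz) ?_
  exact_mod_cast (rfun_denom_pos hlam hz).ne'

lemma mobius_sub_cfun_eq {lam z w : ℂ} (hlam : ‖lam‖ < 1) (hz : ‖z‖ < 1)
    (hD : (conj lam - z) * w + (1 - lam * z) ≠ 0) :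
    ((1 - conj lam) * w - (1 - lam)) / (((conj lam - z) * w + (1 - lam * z)) * (1 - z))
        - cfun z lam
      = (((1 - ‖lam‖ ^ 2) / ((1 - ‖z‖ ^ 2) * (1 + ‖z‖ ^ 2 - 2 * (lam * z).re)) : ℝ) : ℂ) *
        ((conj (1 - lam * z) * w + conj (conj lam - z) * (‖z‖ : ℂ) ^ 2) /
          ((conj lam - z) * w + (1 - lam * z))) := by
  have hc := cfun_denom_ne_zero hlam hz
  have hD' := mul_ne_zero hD (left_ne_zero_of_mul (left_ne_zero_of_mul hc))
  have hr : (((1 - ‖z‖ ^ 2) * (1 + ‖z‖ ^ 2 - 2 * (lam * z).re) : ℝ) : ℂ) ≠ 0 := by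
    exact_mod_cast (rfun_denom_pos hlam hz).ne'
  push_cast at hr ⊢
  unfold cfun
  rw [div_sub_div _ _ hD' hc, div_mul_div_comm,
    div_eq_div_iff (mul_ne_zero hD' hc) (mul_ne_zero hr hD)]
  simp only [← Complex.mul_conj', Complex.re_eq_add_conj]
  simp only [map_sub, map_mul, map_one, Complex.conj_conj]
  ring

lemma dl_sub_one_div_eq {lam w : ℂ} (z : ℂ) (hw : 1 + conj lam * w ≠ 0) :
    (dl lam w - 1) / ((1 - dl lam w * z) * (1 - z))
      = ((1 - conj lam) * w - (1 - lam)) / (((conj lam - z) * w + (1 - lam * z)) * (1 - z)) := by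
  have hsub : dl lam w - 1 = ((1 - conj lam) * w - (1 - lam)) / (1 + conj lam * w) := by
    rw [eq_div_iff hw, dl, sub_mul, div_mul_cancel₀ _ hw]; ring
  have hden : 1 - dl lam w * z = ((conj lam - z) * w + (1 - lam * z)) / (1 + conj lam * w) := by
    rw [eq_div_iff hw, dl, sub_mul, mul_right_comm, div_mul_cancel₀ _ hw]; ring
  rw [hsub, hden, div_mul_eq_mul_div, div_div_div_cancel_right₀ hw]

lemma norm_dl_sub_one_div_sub_cfun_le {lam z w : ℂ} (hlam : ‖lam‖ < 1) (hz : ‖z‖ < 1)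
    (hw : ‖w‖ ≤ ‖z‖) :
    ‖(dl lam w - 1) / ((1 - dl lam w * z) * (1 - z)) - cfun z lam‖ ≤ rfun z lam := by
  have hb := norm_conj_sub_mul_lt hlam hz
  have hD : (conj lam - z) * w + (1 - lam * z) ≠ 0 := by
    refine add_ne_zero_of_norm_lt ((norm_mul_le _ _).trans_lt ?_)
    exact (mul_le_mul_of_nonneg_left hw (norm_nonneg _)).trans_lt hb
  have hq : 1 + conj lam * w ≠ 0 := by
    rw [add_comm]
    refine add_ne_zero_of_norm_lt ?_
    rw [norm_mul, Complex.norm_conj, norm_one]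
    nlinarith [norm_nonneg lam, norm_nonneg w]
  have hcoef : 0 ≤ (1 - ‖lam‖ ^ 2) / ((1 - ‖z‖ ^ 2) * (1 + ‖z‖ ^ 2 - 2 * (lam * z).re)) :=
    div_nonneg (sub_nonneg.2 (pow_le_one₀ (norm_nonneg _) hlam.le)) (rfun_denom_pos hlam hz).le
  rw [dl_sub_one_div_eq z hq, mobius_sub_cfun_eq hlam hz hD, norm_mul, Complex.norm_real,
    Real.norm_of_nonneg hcoef]
  calc _ ≤ (1 - ‖lam‖ ^ 2) / ((1 - ‖z‖ ^ 2) * (1 + ‖z‖ ^ 2 - 2 * (lam * z).re)) * ‖z‖ :=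
        mul_le_mul_of_nonneg_left (norm_conj_mul_add_div_le hw hb.le) hcoef
    _ = rfun z lam := by unfold rfun; ring

lemma eq_of_sub_one_div_add_one_eq_mul {μ z q d p : ℂ} (hμ : μ ≠ 0) (hz : z ≠ 0)
    (h1z : 1 - z ≠ 0) (hpdef : p = 2 * (Real.pi : ℂ) / μ * (z * q) + (1 + z) / (1 - z))
    (hp : p + 1 ≠ 0) (hω : (p - 1) / (p + 1) = z * d) :
    q = μ / Real.pi * ((d - 1) / ((1 - d * z) * (1 - z))) := by
  have hπ : (Real.pi : ℂ) ≠ 0 := Complex.ofReal_ne_zero.2 Real.pi_ne_zero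
  have h1 : p * (1 - d * z) = 1 + d * z := by
    rw [div_eq_iff hp] at hω; linear_combination hω
  have hdz : 1 - d * z ≠ 0 := by
    intro h
    rw [h, mul_zero] at h1
    have : (2 : ℂ) = 0 := by linear_combination h - h1
    norm_num at this
  rw [hpdef] at h1
  field_simp at h1
  rw [div_mul_div_comm, eq_div_iff (mul_ne_zero hπ (mul_ne_zero hdz h1z))]
  apply mul_left_cancel₀ (mul_ne_zero two_ne_zero hz)
  linear_combination h1

lemma memFlam.hasDerivAt_Pfun_zero {μ lam : ℂ} {f : ℂ → ℂ} (hf : memFlam μ lam f) (hμ : μ ≠ 0) :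
    HasDerivAt (Pfun μ f) (2 * lam) 0 := by
  obtain ⟨⟨hfA, hfne, hf0, -⟩, hfd⟩ := hf
  have h0 : (0 : ℂ) ∈ unitDisk := mem_ball_self one_pos
  have hq : HasDerivAt (fun y => y * deriv f y / f y) (deriv f 0) 0 :=
    (((hasDerivAt_id' 0).mul (hfA.deriv 0 h0).differentiableAt.hasDerivAt).fun_div
      (hfA 0 h0).differentiableAt.hasDerivAt (hfne 0 h0)).congr_deriv (by simp [hf0])
  have hm : HasDerivAt (fun y : ℂ => (1 + y) / (1 - y)) 2 0 :=
    (((hasDerivAt_id' 0).const_add 1).fun_div ((hasDerivAt_id' 0).const_sub 1)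
      (by norm_num)).congr_deriv (by norm_num)
  have hπ : (Real.pi : ℂ) ≠ 0 := Complex.ofReal_ne_zero.2 Real.pi_ne_zero
  refine ((hq.const_mul (2 * (Real.pi : ℂ) / μ)).add hm).congr_deriv ?_
  rw [hfd]; field_simp; ring

lemma memFlam.exists_logDeriv_eq {μ lam : ℂ} {f : ℂ → ℂ} (hf : memFlam μ lam f) (hμ : μ ≠ 0)
    (hlam : ‖lam‖ < 1) {z : ℂ} (hz : z ∈ unitDisk) :
    ∃ w, ‖w‖ ≤ ‖z‖ ∧
      deriv f z / f z = μ / Real.pi * ((dl lam w - 1) / ((1 - dl lam w * z) * (1 - z))) := by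
  have hp' : HasDerivAt (Pfun μ f) (2 * lam) 0 := hf.hasDerivAt_Pfun_zero hμ
  obtain ⟨⟨hfA, hfne, hf0, hfP⟩, hfd⟩ := hf
  have h1z : ∀ y ∈ unitDisk, 1 - y ≠ 0 := fun y hy => by
    rw [sub_ne_zero]; rintro rfl; simp [unitDisk] at hy
  rcases eq_or_ne z 0 with rfl | hz0
  · exact ⟨0, le_rfl, by simp [dl, hfd, hf0]⟩
  set p := Pfun μ f
  have hp1 : ∀ y ∈ unitDisk, p y + 1 ≠ 0 := fun y hy h => by
    have := congrArg Complex.re h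
    simp only [Complex.add_re, Complex.one_re, Complex.zero_re] at this
    linarith [hfP y hy]
  have hpD : DifferentiableOn ℂ p unitDisk := by
    have hfD := hfA.differentiableOn
    have hdfD := hfA.deriv.differentiableOn
    unfold p Pfun
    fun_prop (disch := assumption)
  have hp0 : p 0 = 1 := by simp [p, Pfun]
  set ω := fun y => (p y - 1) / (p y + 1)
  have hω' : deriv ω 0 = lam :=
    ((hp'.sub_const 1).div (hp'.add_const 1) (by simp [hp0])).deriv.trans (by rw [hp0]; ring)
  obtain ⟨w, hw, hωz⟩ := exists_norm_le_eq_mul_dl ((hpD.sub_const 1).div (hpD.add_const 1) hp1)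
    (fun y hy => mem_closedBall_zero_iff.2 (norm_sub_one_div_add_one_lt_one (hfP y hy)).le)
    (by simp [hp0]) hω' hlam hz
  exact ⟨w, hw, eq_of_sub_one_div_add_one_eq_mul hμ hz0 (h1z z hz)
    (by simp [p, Pfun, mul_div_assoc]) (hp1 z hz) hωz⟩

lemma memFlam.norm_logDeriv_sub_cfun_le {μ lam : ℂ} {f : ℂ → ℂ} (hf : memFlam μ lam f)
    (hμ : μ ≠ 0) (hlam : ‖lam‖ < 1) {z : ℂ} (hz : z ∈ unitDisk) :
    ‖deriv f z / f z - μ / Real.pi * cfun z lam‖ ≤ ‖μ‖ / Real.pi * rfun z lam := by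
  obtain ⟨w, hw, heq⟩ := hf.exists_logDeriv_eq hμ hlam hz
  rw [heq, ← mul_sub, norm_mul, norm_div, Complex.norm_real, Real.norm_of_nonneg Real.pi_pos.le]
  exact mul_le_mul_of_nonneg_left
    (norm_dl_sub_one_div_sub_cfun_le hlam (mem_ball_zero_iff.1 hz) hw) (by positivity)

lemma continuousOn_cfun {lam : ℂ} (hlam : ‖lam‖ < 1) :
    ContinuousOn (fun z => cfun z lam) unitDisk := by
  unfold cfun
  exact ContinuousOn.div (by fun_prop) (by fun_prop) fun z hz =>
    cfun_denom_ne_zero hlam (mem_ball_zero_iff.1 hz)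

lemma continuousOn_rfun {lam : ℂ} (hlam : ‖lam‖ < 1) :
    ContinuousOn (fun z => rfun z lam) unitDisk := by
  unfold rfun
  exact ContinuousOn.div (by fun_prop) (by fun_prop) fun z hz =>
    (rfun_denom_pos hlam (mem_ball_zero_iff.1 hz)).ne'

lemma integral_comp_mul_eq_sub {U : Set ℂ} {F g : ℂ → ℂ} {γ γ' : ℝ → ℂ} {a b : ℝ}
    (hF : ∀ x ∈ U, HasDerivAt F (g x) x) (hg : ContinuousOn g U)
    (hγ : ∀ t ∈ uIcc a b, HasDerivAt γ (γ' t) t) (hγ' : ContinuousOn γ' (uIcc a b))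
    (hγU : MapsTo γ (uIcc a b) U) :
    ∫ t in a..b, g (γ t) * γ' t = F (γ b) - F (γ a) := by
  have hγc : ContinuousOn γ (uIcc a b) := fun t ht => (hγ t ht).continuousAt.continuousWithinAt
  refine intervalIntegral.integral_eq_sub_of_hasDerivAt
    (fun t ht => (hF _ (hγU ht)).comp t (hγ t ht)) ?_
  exact ((hg.comp hγc hγU).mul hγ').intervalIntegrable

lemma integral_segment_eq_integral_path {r : ℝ} {g : ℂ → ℂ}
    (hg : DifferentiableOn ℂ g (ball 0 r)) {γ : ℝ → ℂ} (hγ : ContDiff ℝ 1 γ)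
    (hγD : MapsTo γ (Icc 0 1) (ball 0 r)) (hγ0 : γ 0 = 0) :
    ∫ t in (0 : ℝ)..1, g (t * γ 1) * γ 1 = ∫ t in (0 : ℝ)..1, g (γ t) * deriv γ t := by
  obtain ⟨F, hF⟩ := hg.isExactOn_ball
  have hI : uIcc (0 : ℝ) 1 = Icc 0 1 := uIcc_of_le zero_le_one
  have hseg : MapsTo (fun t : ℝ => (t : ℂ) * γ 1) (uIcc 0 1) (ball 0 r) := fun t ht => by
    rw [hI] at ht
    have h1 := mem_ball_zero_iff.1 (hγD (right_mem_Icc.2 zero_le_one))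
    rw [mem_ball_zero_iff, norm_mul, Complex.norm_real, Real.norm_of_nonneg ht.1]
    exact (mul_le_of_le_one_left (norm_nonneg _) ht.2).trans_lt h1
  rw [integral_comp_mul_eq_sub hF hg.continuousOn
      (fun t _ => ((hasDerivAt_id' t).ofReal_comp.mul_const (γ 1)).congr_deriv (one_mul _))
      continuousOn_const hseg,
    integral_comp_mul_eq_sub hF hg.continuousOn
      (fun t _ => (hγ.differentiable one_ne_zero t).hasDerivAt)
      (hγ.continuous_deriv le_rfl).continuousOn (hI ▸ hγD)]
  simp [hγ0]

lemma norm_integral_sub_integral_le {U : Set ℂ} {h C : ℂ → ℂ} {R : ℂ → ℝ} {γ : ℝ → ℂ}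
    {a b : ℝ} (hab : a ≤ b) (hγ : ContDiff ℝ 1 γ) (hγU : MapsTo γ (Icc a b) U)
    (hh : ContinuousOn h U) (hC : ContinuousOn C U) (hR : ContinuousOn R U)
    (hbound : ∀ x ∈ U, ‖h x - C x‖ ≤ R x) :
    ‖(∫ t in a..b, h (γ t) * deriv γ t) - ∫ t in a..b, C (γ t) * deriv γ t‖
      ≤ ∫ t in a..b, R (γ t) * ‖deriv γ t‖ := by
  have hγU' : MapsTo γ (uIcc a b) U := by rwa [uIcc_of_le hab]
  have hγc := hγ.continuous.continuousOn (s := uIcc a b)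
  have hγ' := (hγ.continuous_deriv le_rfl).continuousOn (s := uIcc a b)
  have hhi : IntervalIntegrable (fun t => h (γ t) * deriv γ t) MeasureTheory.volume a b :=
    ((hh.comp hγc hγU').mul hγ').intervalIntegrable
  have hCi : IntervalIntegrable (fun t => C (γ t) * deriv γ t) MeasureTheory.volume a b :=
    ((hC.comp hγc hγU').mul hγ').intervalIntegrable
  rw [← intervalIntegral.integral_sub hhi hCi]
  refine intervalIntegral.norm_integral_le_of_norm_le hab (MeasureTheory.ae_of_all _ ?_)
    ((hR.comp hγc hγU').mul (continuous_norm.comp_continuousOn hγ')).intervalIntegrable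
  intro t ht
  rw [← sub_mul, norm_mul]
  exact mul_le_mul_of_nonneg_right (hbound _ (hγU ⟨ht.1.le, ht.2⟩)) (norm_nonneg _)

theorem stmt10_general (μ lam z₀ : ℂ) (hμ : 0 < μ.re) (hlam : ‖lam‖ < 1)
    (γ : ℝ → ℂ) (hγ : ContDiff ℝ 1 γ)
    (hγD : ∀ t ∈ Set.Icc (0:ℝ) 1, γ t ∈ unitDisk)
    (hγ0 : γ 0 = 0) (hγ1 : γ 1 = z₀) :
    Vset μ lam z₀ ⊆
      Metric.closedBall
        (μ / (Real.pi : ℂ) * ∫ t in (0:ℝ)..1, cfun (γ t) lam * deriv γ t)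
        (‖μ‖ / Real.pi * ∫ t in (0:ℝ)..1, rfun (γ t) lam * ‖(deriv γ t)‖) := by
  rintro _ ⟨f, hf, rfl⟩
  have hμ0 : μ ≠ 0 := fun h => by simp [h] at hμ
  have hg : DifferentiableOn ℂ (fun z => deriv f z / f z) unitDisk :=
    hf.1.1.deriv.differentiableOn.div hf.1.1.differentiableOn hf.1.2.1
  rw [Metric.mem_closedBall, dist_eq_norm, logf, ← hγ1,
    integral_segment_eq_integral_path hg hγ hγD hγ0, ← intervalIntegral.integral_const_mul,
    ← intervalIntegral.integral_const_mul]
  simp only [← mul_assoc]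
  exact norm_integral_sub_integral_le (h := fun z => deriv f z / f z)
    (C := fun z => μ / Real.pi * cfun z lam) (R := fun z => ‖μ‖ / Real.pi * rfun z lam)
    zero_le_one hγ hγD hg.continuousOn
    (continuousOn_const.mul (continuousOn_cfun hlam))
    (continuousOn_const.mul (continuousOn_rfun hlam))
    fun z hz => hf.norm_logDeriv_sub_cfun_le hμ0 hlam hz

theorem stmt10 (μ lam z₀ : ℂ) (hμ : 0 < μ.re) (hlam : ‖lam‖ < 1)
    (hz₀ : z₀ ∈ unitDisk) (γ : ℝ → ℂ) (hγ : ContDiff ℝ 1 γ)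
    (hγD : ∀ t ∈ Set.Icc (0:ℝ) 1, γ t ∈ unitDisk)
    (hγ0 : γ 0 = 0) (hγ1 : γ 1 = z₀) :
    Vset μ lam z₀ ⊆
      Metric.closedBall
        (μ / (Real.pi : ℂ) * ∫ t in (0:ℝ)..1, cfun (γ t) lam * deriv γ t)
        (‖μ‖ / Real.pi * ∫ t in (0:ℝ)..1, rfun (γ t) lam * ‖(deriv γ t)‖) :=
  stmt10_general μ lam z₀ hμ hlam γ hγ hγD hγ0 hγ1
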